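/- Functional pruning is permanent: if Set^τ_t = ∅ (i.e. there is no μ lying in Set^τ_{t-1} with Cost^τ_t(μ) ≤ F(t)+β), then Set^τ_T = ∅ for all T > t; in particular τ is never the optimal last-changepoint candidate at any future time. -/

import Mathlib

/-- The FPOP candidate cost function `Cost^τ_t(μ)`. -/
noncomputable def fpopCost (y : ℕ → ℝ) (γ : ℝ → ℝ → ℝ) (β : ℝ) (F : ℕ → ℝ)
    (τ t : ℕ) (μ : ℝ) : ℝ :=
  if τ = t then F t + β else F τ + β + ∑ i ∈ Finset.Ioc τ t, γ (y i) μ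

/-- `Cost*_t(μ) = min over 0 ≤ τ ≤ t of Cost^τ_t(μ)`. -/
noncomputable def fpopCostStar (y : ℕ → ℝ) (γ : ℝ → ℝ → ℝ) (β : ℝ) (F : ℕ → ℝ)
    (t : ℕ) (μ : ℝ) : ℝ :=
  (Finset.range (t + 1)).inf' (Finset.nonempty_range_iff.mpr (Nat.succ_ne_zero t))
    (fun τ => fpopCost y γ β F τ t μ)

/-- `Set^τ_t = {μ : Cost^τ_t(μ) = Cost*_t(μ)}`. -/
noncomputable def fpopSet (y : ℕ → ℝ) (γ : ℝ → ℝ → ℝ) (β : ℝ) (F : ℕ → ℝ)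
    (τ t : ℕ) : Set ℝ :=
  {μ | fpopCost y γ β F τ t μ = fpopCostStar y γ β F t μ}

lemma fpopCost_extend (y : ℕ → ℝ) (γ : ℝ → ℝ → ℝ) (β : ℝ) (F : ℕ → ℝ)
    (τ' t T : ℕ) (h1 : τ' ≤ t) (h2 : t < T) (μ : ℝ) :
    fpopCost y γ β F τ' T μ
      = fpopCost y γ β F τ' t μ + ∑ i ∈ Finset.Ioc t T, γ (y i) μ := by
  unfold fpopCost
  rcases eq_or_lt_of_le h1 with rfl | hlt
  · simp [Nat.ne_of_lt h2]
  · rw [if_neg (Nat.ne_of_lt (lt_trans hlt h2)), if_neg (Nat.ne_of_lt hlt),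
      ← Finset.sum_Ioc_consecutive _ h1 (le_of_lt h2)]; ring

/-- functional pruning is permanent: once `Set^τ_t = ∅`, the
candidate τ stays pruned at all future times. -/
theorem fpop_pruning_permanent (y : ℕ → ℝ) (γ : ℝ → ℝ → ℝ) (β : ℝ) (hβ : 0 ≤ β)
    (C : ℕ → ℕ → ℝ)
    (hC : ∀ τ t : ℕ, τ < t →
      IsLeast {x : ℝ | ∃ μ : ℝ, x = ∑ i ∈ Finset.Ioc τ t, γ (y i) μ} (C τ t))
    (F : ℕ → ℝ) (hF0 : F 0 = -β)
    (hF : ∀ t : ℕ, ∀ ht : 1 ≤ t,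
      F t = (Finset.range t).inf' (Finset.nonempty_range_iff.mpr (by omega))
        (fun τ => F τ + C τ t + β))
    (τ t : ℕ) (hτ : τ < t) (hempty : fpopSet y γ β F τ t = ∅) :
    ∀ T : ℕ, t < T → fpopSet y γ β F τ T = ∅ := by
  intro T hT
  ext μ
  simp only [fpopSet, Set.mem_setOf_eq, Set.mem_empty_iff_false, iff_false]
  -- μ is not in Set^τ_t
  have hμ : fpopCost y γ β F τ t μ ≠ fpopCostStar y γ β F t μ := by
    have := Set.ext_iff.mp hempty μ
    simpa [fpopSet] using this
  -- the min is attained at some τ' ≤ t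
  obtain ⟨τ', hτ'mem, hτ'eq⟩ := Finset.exists_mem_eq_inf'
    (Finset.nonempty_range_iff.mpr (Nat.succ_ne_zero t))
    (fun τ' => fpopCost y γ β F τ' t μ)
  have hτ'le : τ' ≤ t := Nat.lt_succ_iff.mp (Finset.mem_range.mp hτ'mem)
  have hstar_le : fpopCostStar y γ β F t μ ≤ fpopCost y γ β F τ t μ :=
    Finset.inf'_le _ (Finset.mem_range.mpr (by omega))
  have hstrict : fpopCost y γ β F τ' t μ < fpopCost y γ β F τ t μ := by
    have : fpopCostStar y γ β F t μ < fpopCost y γ β F τ t μ :=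
      lt_of_le_of_ne hstar_le (Ne.symm hμ)
    calc fpopCost y γ β F τ' t μ = fpopCostStar y γ β F t μ := hτ'eq.symm
    _ < _ := this
  -- transfer to time T
  have hT1 : fpopCost y γ β F τ' T μ < fpopCost y γ β F τ T μ := by
    rw [fpopCost_extend y γ β F τ' t T hτ'le hT μ,
      fpopCost_extend y γ β F τ t T (le_of_lt hτ) hT μ]
    exact add_lt_add_of_lt_of_le hstrict le_rfl
  have hstarT : fpopCostStar y γ β F T μ ≤ fpopCost y γ β F τ' T μ :=
    Finset.inf'_le _ (Finset.mem_range.mpr (by omega))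
  exact ne_of_gt (lt_of_le_of_lt hstarT hT1)
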